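/- arXiv:hep-th/0003032 — 3 statements merged into one kernel-verified Lean document; each statement's English description precedes it below -/
import Mathlib

section
/- Both improper integrals below converge and satisfy the identity ∫_{1}^{∞} ( y²/√(y⁴ − 1) − 1 ) dy + ∫_{1}^{∞} dy/(y²·√(y⁴ − 1)) = 1. -/
open MeasureTheory Real Set Filter Topology

/-!
The sum of the two integrands is the derivative of `G y = √(y⁴ - 1) / y - y`
(`wilsonPrimitive`) on `(1, ∞)`. `G` is continuous at `1` with `G 1 = -1`, and
`-1/y³ ≤ G y ≤ 0` forces `G y → 0` at infinity.
Since both integrands are nonnegative, the sum is integrable with integral `0 - G 1 = 1`,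
and each integrand, being dominated by the sum, is integrable on its own.
-/

noncomputable def wilsonPrimitive (y : ℝ) : ℝ := √(y ^ 4 - 1) / y - y

lemma pow_four_sub_one_pos {x : ℝ} (hx : 1 < x) : 0 < x ^ 4 - 1 :=
  sub_pos.2 (one_lt_pow₀ hx (by norm_num))

lemma sqrt_pow_four_sub_one_le_sq (x : ℝ) : √(x ^ 4 - 1) ≤ x ^ 2 := by
  rw [Real.sqrt_le_left (by positivity)]
  nlinarith

lemma one_le_sq_div_sqrt_pow_four_sub_one {x : ℝ} (hx : 1 < x) :
    1 ≤ x ^ 2 / √(x ^ 4 - 1) := by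
  rw [le_div_iff₀ (Real.sqrt_pos.2 (pow_four_sub_one_pos hx)), one_mul]
  exact sqrt_pow_four_sub_one_le_sq x

lemma hasDerivAt_wilsonPrimitive {x : ℝ} (hx : 1 < x) :
    HasDerivAt wilsonPrimitive
      ((x ^ 2 / √(x ^ 4 - 1) - 1) + 1 / (x ^ 2 * √(x ^ 4 - 1))) x := by
  have hu := pow_four_sub_one_pos hx
  have hsqrt : HasDerivAt (fun y : ℝ => √(y ^ 4 - 1)) (4 * x ^ 3 / (2 * √(x ^ 4 - 1))) x := by
    simpa using ((hasDerivAt_pow 4 x).sub_const 1).sqrt hu.ne'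
  refine ((hsqrt.div (hasDerivAt_id' x) (by positivity)).sub (hasDerivAt_id' x)).congr_deriv ?_
  have hsq : √(x ^ 4 - 1) ^ 2 = x ^ 4 - 1 := Real.sq_sqrt hu.le
  field_simp
  linear_combination -2 * hsq

lemma continuousAt_wilsonPrimitive_one : ContinuousAt wilsonPrimitive 1 := by
  unfold wilsonPrimitive
  fun_prop (disch := norm_num)

lemma wilsonPrimitive_nonpos {x : ℝ} (hx : 0 < x) : wilsonPrimitive x ≤ 0 := by
  have hdiv : √(x ^ 4 - 1) / x ≤ x := by
    rw [div_le_iff₀ hx]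
    nlinarith [sqrt_pow_four_sub_one_le_sq x]
  unfold wilsonPrimitive
  linarith

lemma neg_inv_pow_three_le_wilsonPrimitive {x : ℝ} (hx : 1 ≤ x) :
    -(x ^ 3)⁻¹ ≤ wilsonPrimitive x := by
  have hx0 : 0 < x := by linarith
  have hsqrt : x ^ 2 - (x ^ 2)⁻¹ ≤ √(x ^ 4 - 1) := by
    apply Real.le_sqrt_of_sq_le
    have hinv : ((x ^ 2)⁻¹) ^ 2 ≤ 1 :=
      pow_le_one₀ (by positivity) (inv_le_one_of_one_le₀ (one_le_pow₀ hx))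
    have hmul : x ^ 2 * (x ^ 2)⁻¹ = 1 := by field_simp
    nlinarith
  have hlower : -(x ^ 3)⁻¹ + x = (x ^ 2 - (x ^ 2)⁻¹) / x := by field_simp; ring
  have hdiv := div_le_div_of_nonneg_right hsqrt hx0.le
  unfold wilsonPrimitive
  linarith

lemma tendsto_wilsonPrimitive_atTop : Tendsto wilsonPrimitive atTop (𝓝 0) := by
  have hlow : Tendsto (fun x : ℝ => -(x ^ 3)⁻¹) atTop (𝓝 0) := by
    simpa using (tendsto_pow_atTop (α := ℝ) (n := 3) (by norm_num)).inv_tendsto_atTop.neg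
  refine tendsto_of_tendsto_of_tendsto_of_le_of_le' hlow tendsto_const_nhds ?_ ?_
  · filter_upwards [eventually_ge_atTop 1] with x hx
    exact neg_inv_pow_three_le_wilsonPrimitive hx
  · filter_upwards [eventually_gt_atTop 0] with x hx
    exact wilsonPrimitive_nonpos hx

lemma IntegrableOn.of_add_of_nonneg {α : Type*} [MeasurableSpace α] {μ : Measure α} {s : Set α}
    {f g : α → ℝ} (hs : MeasurableSet s) (hfg : IntegrableOn (fun x => f x + g x) s μ)
    (hg : AEStronglyMeasurable g (μ.restrict s)) (hf0 : ∀ x ∈ s, 0 ≤ f x)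
    (hg0 : ∀ x ∈ s, 0 ≤ g x) : IntegrableOn f s μ ∧ IntegrableOn g s μ := by
  have hg_int : IntegrableOn g s μ := by
    refine hfg.mono' hg ?_
    filter_upwards [ae_restrict_mem hs] with x hx
    rw [Real.norm_of_nonneg (hg0 x hx)]
    linarith [hf0 x hx]
  refine ⟨?_, hg_int⟩
  convert hfg.sub hg_int using 1
  ext x
  simp

/-- Both improper integrals `∫_{1}^{∞} ( y²/√(y⁴ − 1) − 1 ) dy` and
`∫_{1}^{∞} dy/(y²·√(y⁴ − 1))` converge, and their sum equals `1`. -/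
theorem adS5_wilson_loop_integration_by_parts :
    IntegrableOn (fun y : ℝ => y ^ 2 / Real.sqrt (y ^ 4 - 1) - 1) (Ioi 1) ∧
    IntegrableOn (fun y : ℝ => 1 / (y ^ 2 * Real.sqrt (y ^ 4 - 1))) (Ioi 1) ∧
    (∫ y in Ioi (1 : ℝ), (y ^ 2 / Real.sqrt (y ^ 4 - 1) - 1)) +
      (∫ y in Ioi (1 : ℝ), 1 / (y ^ 2 * Real.sqrt (y ^ 4 - 1))) = 1 := by
  have hcont : ContinuousWithinAt wilsonPrimitive (Ici 1) 1 :=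
    continuousAt_wilsonPrimitive_one.continuousWithinAt
  have hderiv : ∀ x ∈ Ioi (1 : ℝ), HasDerivAt wilsonPrimitive
      ((x ^ 2 / √(x ^ 4 - 1) - 1) + 1 / (x ^ 2 * √(x ^ 4 - 1))) x :=
    fun x hx => hasDerivAt_wilsonPrimitive hx
  have hf0 : ∀ x ∈ Ioi (1 : ℝ), 0 ≤ x ^ 2 / √(x ^ 4 - 1) - 1 :=
    fun x hx => sub_nonneg.2 (one_le_sq_div_sqrt_pow_four_sub_one hx)
  have hg0 : ∀ x ∈ Ioi (1 : ℝ), 0 ≤ 1 / (x ^ 2 * √(x ^ 4 - 1)) := fun x _ => by positivity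
  have hnonneg : ∀ x ∈ Ioi (1 : ℝ),
      0 ≤ (x ^ 2 / √(x ^ 4 - 1) - 1) + 1 / (x ^ 2 * √(x ^ 4 - 1)) :=
    fun x hx => add_nonneg (hf0 x hx) (hg0 x hx)
  have hsum : IntegrableOn _ (Ioi (1 : ℝ)) :=
    integrableOn_Ioi_deriv_of_nonneg hcont hderiv hnonneg tendsto_wilsonPrimitive_atTop
  have hg : Measurable fun y : ℝ => 1 / (y ^ 2 * √(y ^ 4 - 1)) := by fun_prop
  obtain ⟨h1, h2⟩ :=
    IntegrableOn.of_add_of_nonneg measurableSet_Ioi hsum hg.aestronglyMeasurable hf0 hg0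
  refine ⟨h1, h2, ?_⟩
  rw [← integral_add h1 h2,
    integral_Ioi_of_hasDerivAt_of_nonneg hcont hderiv hnonneg tendsto_wilsonPrimitive_atTop]
  norm_num [wilsonPrimitive]
end

section
/- Let R > 0. For U₀ > 0 define L(U₀) = (2R²/U₀)·∫_{1}^{∞} dy/(y²√(y⁴−1)) and E(U₀) = (U₀/π)·( ∫_{1}^{∞} ( y²/√(y⁴−1) − 1 ) dy − 1 ). Then for every U₀ > 0, E(U₀)·L(U₀) = − 4π²R² / Γ(1/4)⁴; in particular E(U₀) is negative and the quark–antiquark potential obeys the conformal Coulomb law E = − (4π²R²/Γ(1/4)⁴)·(1/L). -/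
/-!
Both integrals are elementary up to one Beta value. The substitution `x = y⁻⁴` turns the
separation integral into `B(3/4, 1/2)/4 = √π Γ(3/4)/Γ(1/4)`, and Euler's reflection formula
`Γ(1/4) Γ(3/4) = π√2` makes its square `2π³/Γ(1/4)⁴`. The sum of the two integrands is the
derivative of `√(y⁴-1)/y - y`, which rises from `-1` at `y = 1` to `0` at infinity. Both
integrands are nonnegative, so they are integrable, and the energy integral is `1` minus the
separation integral: `E = -(U₀/π)·∫ dy/(y²√(y⁴-1))`. Multiplying by `L` makes `U₀` cancel.
-/

open MeasureTheory Real Set Filter Topology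

theorem integral_Ioo_rpow_mul_one_sub_rpow {α β : ℝ} (hα : 0 < α) (hβ : 0 < β) :
    ∫ x in Ioo (0 : ℝ) 1, x ^ (α - 1) * (1 - x) ^ (β - 1)
      = Gamma α * Gamma β / Gamma (α + β) := by
  have hbeta : Complex.betaIntegral α β
      = ((∫ x in (0 : ℝ)..1, x ^ (α - 1) * (1 - x) ^ (β - 1) : ℝ) : ℂ) := by
    rw [Complex.betaIntegral, ← intervalIntegral.integral_ofReal]
    refine intervalIntegral.integral_congr fun x hx => ?_
    rw [uIcc_of_le zero_le_one] at hx
    push_cast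
    rw [Complex.ofReal_cpow hx.1, Complex.ofReal_cpow (sub_nonneg.2 hx.2)]
    push_cast
    rfl
  have h := Complex.Gamma_mul_Gamma_eq_betaIntegral (s := α) (t := β) (by simpa) (by simpa)
  rw [hbeta, ← Complex.ofReal_add, Complex.Gamma_ofReal, Complex.Gamma_ofReal,
    Complex.Gamma_ofReal] at h
  norm_cast at h
  rw [intervalIntegral.integral_of_le zero_le_one, integral_Ioc_eq_integral_Ioo] at h
  rw [h, mul_div_cancel_left₀ _ (Gamma_pos_of_pos (add_pos hα hβ)).ne']

theorem Gamma_one_quarter_mul_Gamma_three_quarters :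
    Gamma (1 / 4) * Gamma (3 / 4) = π * √2 := by
  have h := Gamma_mul_Gamma_one_sub (1 / 4)
  rw [show (1 : ℝ) - 1 / 4 = 3 / 4 by norm_num, show π * (1 / 4) = π / 4 by ring,
    sin_pi_div_four] at h
  rw [h]
  field_simp
  rw [sq_sqrt zero_le_two]

noncomputable def separationIntegrand (y : ℝ) : ℝ := 1 / (y ^ 2 * √(y ^ 4 - 1))

noncomputable def energyIntegrand (y : ℝ) : ℝ := y ^ 2 / √(y ^ 4 - 1) - 1

lemma pow_four_sub_one_pos_s3 {y : ℝ} (hy : 1 < y) : 0 < y ^ 4 - 1 :=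
  sub_pos.2 (one_lt_pow₀ hy (by norm_num))

lemma image_inv_pow_four_Ioi_one : (fun y : ℝ => (y ^ 4)⁻¹) '' Ioi 1 = Ioo 0 1 := by
  ext x
  constructor
  · rintro ⟨y, hy, rfl⟩
    have hy4 : (1 : ℝ) < y ^ 4 := one_lt_pow₀ hy (by norm_num)
    exact ⟨by positivity, inv_lt_one_of_one_lt₀ hy4⟩
  · rintro ⟨hx0, hx1⟩
    refine ⟨x ^ (-(1 / 4) : ℝ), one_lt_rpow_of_pos_of_lt_one_of_neg hx0 hx1 (by norm_num), ?_⟩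
    show ((x ^ (-(1 / 4) : ℝ)) ^ 4)⁻¹ = x
    rw [← rpow_natCast, ← rpow_mul hx0.le]
    norm_num [rpow_neg_one]

lemma integral_separationIntegrand_eq_beta :
    ∫ y in Ioi (1 : ℝ), separationIntegrand y
      = (1 / 4) * ∫ x in Ioo (0 : ℝ) 1, x ^ ((3 : ℝ) / 4 - 1) * (1 - x) ^ ((1 : ℝ) / 2 - 1) := by
  have hderiv : ∀ y ∈ Ioi (1 : ℝ),
      HasDerivWithinAt (fun y : ℝ => (y ^ 4)⁻¹) (-(4 * y ^ 3) / (y ^ 4) ^ 2) (Ioi 1) y :=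
    fun y hy =>
      ((hasDerivAt_pow 4 y).inv (pow_ne_zero 4 (zero_lt_one.trans hy).ne')).hasDerivWithinAt
  have hinj : InjOn (fun y : ℝ => (y ^ 4)⁻¹) (Ioi 1) := fun a ha b hb hab =>
    (pow_left_inj₀ (zero_le_one.trans ha.le) (zero_le_one.trans hb.le) (by norm_num)).1
      (inv_injective hab)
  rw [← image_inv_pow_four_Ioi_one,
    integral_image_eq_integral_abs_deriv_smul measurableSet_Ioi hderiv hinj,
    ← integral_const_mul]
  refine setIntegral_congr_fun measurableSet_Ioi fun y (hy : 1 < y) => ?_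
  have hy0 : 0 < y := zero_lt_one.trans hy
  have h4 := pow_four_sub_one_pos_s3 hy
  have hx : ((y ^ 4)⁻¹ : ℝ) ^ ((3 : ℝ) / 4 - 1) = y := by
    rw [show (3 : ℝ) / 4 - 1 = -(1 / 4) by norm_num, inv_rpow (by positivity),
      rpow_neg (by positivity), inv_inv, ← rpow_natCast, ← rpow_mul hy0.le]
    norm_num
  have hx' : (1 - (y ^ 4)⁻¹ : ℝ) ^ ((1 : ℝ) / 2 - 1) = y ^ 2 / √(y ^ 4 - 1) := by
    rw [show (1 : ℝ) - (y ^ 4)⁻¹ = (y ^ 4 - 1) / (y ^ 2) ^ 2 by field_simp,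
      show (1 : ℝ) / 2 - 1 = -(1 / 2) by norm_num, rpow_neg (by positivity),
      ← sqrt_eq_rpow, sqrt_div h4.le, sqrt_sq (by positivity), inv_div]
  rw [smul_eq_mul, hx, hx', abs_div, abs_neg, abs_of_pos (by positivity),
    abs_of_pos (by positivity), separationIntegrand]
  field_simp

lemma separationIntegrand_nonneg (y : ℝ) : 0 ≤ separationIntegrand y := by
  unfold separationIntegrand; positivity

lemma energyIntegrand_nonneg {y : ℝ} (hy : 1 < y) : 0 ≤ energyIntegrand y := by
  have hs := sqrt_pos.2 (pow_four_sub_one_pos_s3 hy)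
  rw [energyIntegrand, sub_nonneg, le_div_iff₀ hs, one_mul]
  calc √(y ^ 4 - 1) ≤ √((y ^ 2) ^ 2) := sqrt_le_sqrt (by nlinarith)
    _ = y ^ 2 := sqrt_sq (sq_nonneg y)

noncomputable def stringPrimitive (y : ℝ) : ℝ := √(y ^ 4 - 1) / y - y

lemma hasDerivAt_stringPrimitive {y : ℝ} (hy : 1 < y) :
    HasDerivAt stringPrimitive (separationIntegrand y + energyIntegrand y) y := by
  have hy0 : 0 < y := zero_lt_one.trans hy
  have h4 := pow_four_sub_one_pos_s3 hy
  have hsqrt : HasDerivAt (fun y : ℝ => √(y ^ 4 - 1)) (4 * y ^ 3 / (2 * √(y ^ 4 - 1))) y := by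
    simpa using ((hasDerivAt_pow 4 y).sub_const 1).sqrt h4.ne'
  refine ((hsqrt.div (hasDerivAt_id' y) hy0.ne').sub (hasDerivAt_id' y)).congr_deriv ?_
  rw [separationIntegrand, energyIntegrand]
  field_simp
  linear_combination -2 * sq_sqrt h4.le

lemma stringPrimitive_eq_neg_inv {y : ℝ} (hy : 1 < y) :
    stringPrimitive y = -(y * (√(y ^ 4 - 1) + y ^ 2))⁻¹ := by
  have hy0 : 0 < y := zero_lt_one.trans hy
  have h4 := pow_four_sub_one_pos_s3 hy
  rw [stringPrimitive]
  field_simp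
  linear_combination sq_sqrt h4.le

lemma tendsto_stringPrimitive_atTop : Tendsto stringPrimitive atTop (𝓝 0) := by
  have hden : Tendsto (fun y : ℝ => y * (√(y ^ 4 - 1) + y ^ 2)) atTop atTop := by
    refine tendsto_atTop_mono' atTop ?_ tendsto_id
    filter_upwards [eventually_ge_atTop (1 : ℝ)] with y hy
    have := sqrt_nonneg (y ^ 4 - 1)
    show y ≤ y * (√(y ^ 4 - 1) + y ^ 2)
    nlinarith
  rw [← neg_zero]
  refine hden.inv_tendsto_atTop.neg.congr' ?_
  filter_upwards [eventually_gt_atTop (1 : ℝ)] with y hy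
  rw [stringPrimitive_eq_neg_inv hy, Pi.inv_apply]

lemma continuousWithinAt_stringPrimitive_one : ContinuousWithinAt stringPrimitive (Ici 1) 1 := by
  unfold stringPrimitive
  exact ContinuousAt.continuousWithinAt (by fun_prop (disch := norm_num))

lemma integrableOn_separationIntegrand_add_energyIntegrand :
    IntegrableOn (fun y => separationIntegrand y + energyIntegrand y) (Ioi 1) :=
  integrableOn_Ioi_deriv_of_nonneg continuousWithinAt_stringPrimitive_one
    (fun _ hy => hasDerivAt_stringPrimitive hy)
    (fun _ hy => add_nonneg (separationIntegrand_nonneg _) (energyIntegrand_nonneg hy))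
    tendsto_stringPrimitive_atTop

lemma integrableOn_separationIntegrand : IntegrableOn separationIntegrand (Ioi 1) := by
  refine integrableOn_separationIntegrand_add_energyIntegrand.mono'
    (by unfold separationIntegrand; fun_prop : Measurable _).aestronglyMeasurable.restrict ?_
  refine ae_restrict_of_forall_mem measurableSet_Ioi fun y (hy : 1 < y) => ?_
  rw [norm_of_nonneg (separationIntegrand_nonneg y)]
  exact le_add_of_nonneg_right (energyIntegrand_nonneg hy)

lemma integrableOn_energyIntegrand : IntegrableOn energyIntegrand (Ioi 1) := by
  refine integrableOn_separationIntegrand_add_energyIntegrand.mono'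
    (by unfold energyIntegrand; fun_prop : Measurable _).aestronglyMeasurable.restrict ?_
  refine ae_restrict_of_forall_mem measurableSet_Ioi fun y (hy : 1 < y) => ?_
  rw [norm_of_nonneg (energyIntegrand_nonneg hy)]
  exact le_add_of_nonneg_left (separationIntegrand_nonneg y)

lemma integral_separationIntegrand_add_integral_energyIntegrand :
    (∫ y in Ioi (1 : ℝ), separationIntegrand y) + ∫ y in Ioi (1 : ℝ), energyIntegrand y = 1 := by
  rw [← integral_add integrableOn_separationIntegrand integrableOn_energyIntegrand,
    integral_Ioi_of_hasDerivAt_of_tendsto continuousWithinAt_stringPrimitive_one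
      (fun _ hy => hasDerivAt_stringPrimitive hy)
      integrableOn_separationIntegrand_add_energyIntegrand tendsto_stringPrimitive_atTop]
  norm_num [stringPrimitive]

lemma integral_separationIntegrand :
    ∫ y in Ioi (1 : ℝ), separationIntegrand y = √π * Gamma (3 / 4) / Gamma (1 / 4) := by
  rw [integral_separationIntegrand_eq_beta,
    integral_Ioo_rpow_mul_one_sub_rpow (by norm_num) (by norm_num), Gamma_one_half_eq,
    show (3 / 4 : ℝ) + 1 / 2 = 1 / 4 + 1 by norm_num, Gamma_add_one (by norm_num)]
  field_simp

lemma integral_separationIntegrand_pos : 0 < ∫ y in Ioi (1 : ℝ), separationIntegrand y := by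
  rw [integral_separationIntegrand]
  have := Gamma_pos_of_pos (by norm_num : (0 : ℝ) < 1 / 4)
  have := Gamma_pos_of_pos (by norm_num : (0 : ℝ) < 3 / 4)
  have := sqrt_pos.2 pi_pos
  positivity

lemma sq_integral_separationIntegrand :
    (∫ y in Ioi (1 : ℝ), separationIntegrand y) ^ 2 = 2 * π ^ 3 / Gamma (1 / 4) ^ 4 := by
  have hΓ : Gamma (1 / 4) ≠ 0 := (Gamma_pos_of_pos (by norm_num)).ne'
  rw [integral_separationIntegrand, eq_div_iff (by positivity)]
  calc (√π * Gamma (3 / 4) / Gamma (1 / 4)) ^ 2 * Gamma (1 / 4) ^ 4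
      = √π ^ 2 * (Gamma (1 / 4) * Gamma (3 / 4)) ^ 2 := by field_simp
    _ = 2 * π ^ 3 := by
      rw [Gamma_one_quarter_mul_Gamma_three_quarters, mul_pow, sq_sqrt pi_pos.le,
        sq_sqrt zero_le_two]
      ring

/-- For the static Nambu–Goto string in `AdS₅×S⁵` with radius-squared parameter `R²`:
with `L(U₀) = (2R²/U₀)·∫_{1}^{∞} dy/(y²√(y⁴−1))` the separation and
`E(U₀) = (U₀/π)·( ∫_{1}^{∞} ( y²/√(y⁴−1) − 1 ) dy − 1 )` the renormalized energy, for every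
`U₀ > 0` one has `E(U₀)·L(U₀) = −4π²R²/Γ(1/4)⁴`; in particular `E(U₀) < 0` and
`E = −(4π²R²/Γ(1/4)⁴)·(1/L)`. -/
theorem adS5_conformal_coulomb_law (R : ℝ) (hR : 0 < R) (L E : ℝ → ℝ)
    (hL : ∀ U₀, L U₀ =
      (2 * R ^ 2 / U₀) * ∫ y in Ioi (1 : ℝ), 1 / (y ^ 2 * Real.sqrt (y ^ 4 - 1)))
    (hE : ∀ U₀, E U₀ =
      (U₀ / Real.pi) * ((∫ y in Ioi (1 : ℝ), (y ^ 2 / Real.sqrt (y ^ 4 - 1) - 1)) - 1)) :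
    ∀ U₀ : ℝ, 0 < U₀ →
      E U₀ * L U₀ = -(4 * Real.pi ^ 2 * R ^ 2 / (Real.Gamma (1 / 4)) ^ 4) ∧
      E U₀ < 0 ∧
      E U₀ = -(4 * Real.pi ^ 2 * R ^ 2 / (Real.Gamma (1 / 4)) ^ 4) * (1 / L U₀) := by
  intro U₀ hU₀
  set A := ∫ y in Ioi (1 : ℝ), separationIntegrand y
  have hA : 0 < A := integral_separationIntegrand_pos
  have hLA : L U₀ = 2 * R ^ 2 / U₀ * A := hL U₀
  have hEA : E U₀ = -(U₀ / π) * A := by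
    have hEB : E U₀ = U₀ / π * ((∫ y in Ioi (1 : ℝ), energyIntegrand y) - 1) := hE U₀
    linear_combination hEB + U₀ / π * integral_separationIntegrand_add_integral_energyIntegrand
  have hEL : E U₀ * L U₀ = -(4 * π ^ 2 * R ^ 2 / Gamma (1 / 4) ^ 4) := by
    have hΓ : Gamma (1 / 4) ≠ 0 := (Gamma_pos_of_pos (by norm_num)).ne'
    calc E U₀ * L U₀ = -(2 * R ^ 2 / π) * A ^ 2 := by rw [hEA, hLA]; field_simp
      _ = _ := by rw [sq_integral_separationIntegrand]; field_simp; ring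
  have hL0 : L U₀ ≠ 0 := by rw [hLA]; positivity
  refine ⟨hEL, ?_, ?_⟩
  · rw [hEA, neg_mul, neg_lt_zero]
    positivity
  · rw [← hEL, mul_one_div, mul_div_cancel_right₀ _ hL0]
end

section
/- (Sufficient condition for confinement: diverging g at a horizon.) Let s_T > 0, let f : [s_T, ∞) → ℝ be continuously differentiable with f(s_T) > 0 and f′(s) > 0 for all s ≥ s_T, and let g(s) = h(s)/√(s − s_T) for s > s_T, where h : [s_T, ∞) → ℝ is continuous, nonnegative, and h(s_T) > 0. Assume ∫^{∞} g(s)/f(s)² ds < ∞. For s₀ > s_T define L(s₀) = 2∫_{s₀}^{∞} (g(s)/f(s))·f(s₀)/√(f(s)² − f(s₀)²) ds and E(s₀) = f(s₀)·L(s₀) + 2∫_{s₀}^{∞} (g(s)/f(s))·( √(f(s)² − f(s₀)²) − f(s) ) ds − 2∫_{s_T}^{s₀} g(s) ds. Then L(s₀) → ∞ as s₀ → s_T⁺ and E(s₀)/L(s₀) → f(s_T) as s₀ → s_T⁺; i.e. the Wilson loop exhibits area-law (linearly confining) behavior with string tension f(s_T). -/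
/-!
Near the horizon `g s ≥ c / √(s - sT)` while `f s ^ 2 - f s₀ ^ 2 ≤ C (s - sT)`, so on `(s₀, b]`
the integrand of `L s₀` dominates a multiple of `(s - sT)⁻¹` and `L s₀` grows like
`log (s₀ - sT)⁻¹`. Its integrability (needed for the Bochner integral to mean anything) comes from
`f s - f s₀ ≥ μ (s - s₀)`, which leaves only an integrable inverse-square-root singularity at `s₀`.
On the other hand `0 ≤ f - √(f ^ 2 - f₀ ^ 2) ≤ f₀ ^ 2 / f` and `g` is integrable at the horizon,
so `E s₀ - f s₀ * L s₀` stays bounded, and dividing by `L s₀ → ∞` gives `E / L → f sT`.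
-/

open MeasureTheory Real Set Filter Topology

lemma integrableOn_Ioc_of_norm_le_div_sqrt_sub {a b C : ℝ} {φ : ℝ → ℝ}
    (hφ : AEStronglyMeasurable φ (volume.restrict (Ioc a b)))
    (hbound : ∀ s ∈ Ioc a b, ‖φ s‖ ≤ C / √(s - a)) : IntegrableOn φ (Ioc a b) := by
  rcases le_or_gt b a with hba | hab
  · simp [Ioc_eq_empty (not_lt.2 hba)]
  have hdom : IntegrableOn (fun s => C * (s - a) ^ (-(1 / 2) : ℝ)) (Ioc a b) := by
    refine (intervalIntegrable_iff_integrableOn_Ioc_of_le hab.le).1 (.const_mul ?_ C)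
    simpa using (intervalIntegral.intervalIntegrable_rpow'
      (by norm_num : (-1 : ℝ) < -(1 / 2))).comp_sub_right a (a := 0) (b := b - a)
  refine hdom.mono' hφ ((ae_restrict_iff' measurableSet_Ioc).2 (ae_of_all _ fun s hs => ?_))
  rw [rpow_neg (sub_pos.2 hs.1).le, ← sqrt_eq_rpow, ← div_eq_mul_inv]
  exact hbound s hs

lemma integral_Ioc_inv_sub {a b c : ℝ} (hca : c < a) (hab : a ≤ b) :
    ∫ s in Ioc a b, (s - c)⁻¹ = log (b - c) - log (a - c) := by
  rw [← intervalIntegral.integral_of_le hab,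
    intervalIntegral.integral_comp_sub_right (fun x => x⁻¹), integral_inv,
    log_div (by linarith) (by linarith)]
  rw [mem_uIcc]
  rintro (⟨h, -⟩ | ⟨h, -⟩) <;> linarith

lemma tendsto_log_sub_sub_log_sub_nhdsGT (a b : ℝ) :
    Tendsto (fun x => log (b - a) - log (x - a)) (𝓝[>] a) atTop := by
  have h : Tendsto (fun x => x - a) (𝓝[>] a) (𝓝[>] 0) := by
    simpa using (continuous_sub_right a).continuousWithinAt.tendsto_nhdsWithin
      (x := a) (s := Ioi a) (t := Ioi 0) fun x hx => sub_pos.2 hx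
  simpa [sub_eq_add_neg] using tendsto_atTop_add_const_left _ (log (b - a))
    (tendsto_neg_atBot_atTop.comp (tendsto_log_nhdsGT_zero.comp h))

lemma tendsto_div_of_abs_sub_mul_le {α : Type*} {l : Filter α} {u v w : α → ℝ} {c B : ℝ}
    (hv : Tendsto v l atTop) (hw : Tendsto w l (𝓝 c)) (hB : ∀ᶠ x in l, |u x - w x * v x| ≤ B) :
    Tendsto (fun x => u x / v x) l (𝓝 c) := by
  have hrem : Tendsto (fun x => (u x - w x * v x) / v x) l (𝓝 0) := by
    refine squeeze_zero_norm' ?_ (tendsto_const_nhds.div_atTop hv (a := B))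
    filter_upwards [hB, hv.eventually_gt_atTop 0] with x hx hvx
    rw [norm_div, norm_of_nonneg hvx.le]
    exact div_le_div_of_nonneg_right hx hvx.le
  refine (add_zero c ▸ hw.add hrem).congr' ?_
  filter_upwards [hv.eventually_gt_atTop 0] with x hx
  field_simp
  ring

lemma sqrt_sq_sub_sq_le {x : ℝ} (hx : 0 ≤ x) (y : ℝ) : √(x ^ 2 - y ^ 2) ≤ x :=
  sqrt_le_iff.2 ⟨hx, by nlinarith [sq_nonneg y]⟩

lemma sub_sqrt_sq_sub_sq_le {x : ℝ} (hx : 0 < x) (y : ℝ) : x - √(x ^ 2 - y ^ 2) ≤ y ^ 2 / x := by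
  have h : x ^ 2 - y ^ 2 ≤ √(x ^ 2 - y ^ 2) * x := by
    rcases le_or_gt 0 (x ^ 2 - y ^ 2) with ht | ht
    · calc x ^ 2 - y ^ 2 = √(x ^ 2 - y ^ 2) * √(x ^ 2 - y ^ 2) := (mul_self_sqrt ht).symm
        _ ≤ √(x ^ 2 - y ^ 2) * x :=
          mul_le_mul_of_nonneg_left (sqrt_sq_sub_sq_le hx.le y) (sqrt_nonneg _)
    · linarith [mul_nonneg (sqrt_nonneg (x ^ 2 - y ^ 2)) hx.le]
  rw [le_div_iff₀ hx]
  nlinarith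

lemma div_mul_div_sqrt_sq_sub_sq_le {γ x y : ℝ} (hγ : 0 ≤ γ) (hy : 0 < y) (hyx : y < x) :
    γ / x * y / √(x ^ 2 - y ^ 2) ≤ γ / √(y * (x - y)) := by
  have hnum : γ / x * y ≤ γ := by
    rw [div_mul_eq_mul_div, div_le_iff₀ (hy.trans hyx)]
    exact mul_le_mul_of_nonneg_left hyx.le hγ
  exact div_le_div₀ hγ hnum (sqrt_pos.2 (mul_pos hy (sub_pos.2 hyx)))
    (sqrt_le_sqrt (by nlinarith))

lemma div_sqrt_sq_sub_sq_le_of_le {x y z : ℝ} (hy : 0 ≤ y) (hyz : y < z) (hzx : z ≤ x) :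
    x / √(x ^ 2 - y ^ 2) ≤ z / √(z ^ 2 - y ^ 2) := by
  have hz : 0 < z := hy.trans_lt hyz
  have hx : 0 < x := hz.trans_le hzx
  have hzy : 0 < z ^ 2 - y ^ 2 := by nlinarith
  have hxy : 0 < x ^ 2 - y ^ 2 := by nlinarith
  rw [div_le_div_iff₀ (sqrt_pos.2 hxy) (sqrt_pos.2 hzy),
    ← pow_le_pow_iff_left₀ (by positivity) (by positivity) two_ne_zero,
    mul_pow, mul_pow, sq_sqrt hxy.le, sq_sqrt hzy.le]
  nlinarith [mul_le_mul_of_nonneg_right (pow_le_pow_left₀ hz.le hzx 2) (sq_nonneg y)]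

lemma le_div_mul_div_sqrt_sq_sub_sq {c t γ m y x F M : ℝ} (hc : 0 ≤ c) (ht : 0 < t)
    (hγ : c / √t ≤ γ) (hm : 0 < m) (hmy : m ≤ y) (hyx : y < x) (hxF : x ≤ F)
    (hxy : x - y ≤ M * t) :
    c * m / (F * √(2 * M * F)) / t ≤ γ / x * y / √(x ^ 2 - y ^ 2) := by
  have hx : 0 < x := hm.trans_le hmy |>.trans hyx
  have hM : 0 < M := pos_of_mul_pos_left (by linarith : 0 < M * t) ht.le
  have hsq : √(x ^ 2 - y ^ 2) ≤ √(2 * M * F * t) := sqrt_le_sqrt (by nlinarith)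
  have hF : 0 < F := hx.trans_le hxF
  have hγ0 : 0 ≤ γ := (div_nonneg hc (sqrt_nonneg t)).trans hγ
  calc c * m / (F * √(2 * M * F)) / t = c / √t / F * m / √(2 * M * F * t) := by
        rw [sqrt_mul (by positivity : (0 : ℝ) ≤ 2 * M * F) t]
        conv_lhs => rw [← mul_self_sqrt ht.le]
        field_simp
    _ ≤ γ / x * y / √(x ^ 2 - y ^ 2) :=
        div_le_div₀ (mul_nonneg (div_nonneg hγ0 hx.le) (hm.le.trans hmy))
          (mul_le_mul (div_le_div₀ hγ0 hγ hx hxF) hmy hm.le (div_nonneg hγ0 hx.le))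
          (sqrt_pos.2 (by nlinarith)) hsq

lemma deriv_eq_derivWithin_Ici {f : ℝ → ℝ} {a x : ℝ} (hx : a < x) :
    deriv f x = derivWithin f (Ici a) x :=
  (derivWithin_of_mem_nhds (Ici_mem_nhds hx)).symm

lemma strictMonoOn_Ici_of_derivWithin_pos {f : ℝ → ℝ} {a : ℝ} (hf : ContinuousOn f (Ici a))
    (hf' : ∀ x ∈ Ioi a, 0 < derivWithin f (Ici a) x) : StrictMonoOn f (Ici a) :=
  strictMonoOn_of_deriv_pos (convex_Ici a) hf fun x hx => by
    rw [interior_Ici] at hx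
    rw [deriv_eq_derivWithin_Ici hx]
    exact hf' x hx

lemma ContDiffOn.exists_sub_le_mul_sub {f : ℝ → ℝ} {a : ℝ} (hf : ContDiffOn ℝ 1 f (Ici a))
    (d : ℝ) : ∃ M, ∀ x y, a ≤ x → x ≤ y → y ≤ d → f y - f x ≤ M * (y - x) := by
  obtain ⟨M, hM⟩ := isCompact_Icc.bddAbove_image
    ((hf.continuousOn_derivWithin (uniqueDiffOn_Ici a) le_rfl).mono
      (Icc_subset_Ici_self : Icc a d ⊆ Ici a))
  refine ⟨M, fun x y hx hxy hyd => (convex_Icc a d).image_sub_le_mul_sub_of_deriv_le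
    (hf.continuousOn.mono Icc_subset_Ici_self) ?_ ?_ x ⟨hx, hxy.trans hyd⟩ y
    ⟨hx.trans hxy, hyd⟩ hxy⟩
  · rw [interior_Icc]
    exact (hf.differentiableOn one_ne_zero).mono (Ioo_subset_Icc_self.trans Icc_subset_Ici_self)
  · intro z hz
    rw [interior_Icc] at hz
    rw [deriv_eq_derivWithin_Ici hz.1]
    exact hM ⟨z, Ioo_subset_Icc_self hz, rfl⟩

lemma ContDiffOn.exists_mul_sub_le_sub {f : ℝ → ℝ} {a d : ℝ} (hf : ContDiffOn ℝ 1 f (Ici a))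
    (hf' : ∀ x ∈ Icc a d, 0 < derivWithin f (Ici a) x) (had : a ≤ d) :
    ∃ μ > 0, ∀ x y, a ≤ x → x ≤ y → y ≤ d → μ * (y - x) ≤ f y - f x := by
  obtain ⟨z, hz, hmin⟩ := isCompact_Icc.exists_isMinOn (nonempty_Icc.2 had)
    ((hf.continuousOn_derivWithin (uniqueDiffOn_Ici a) le_rfl).mono Icc_subset_Ici_self)
  refine ⟨_, hf' z hz, fun x y hx hxy hyd => (convex_Icc a d).mul_sub_le_image_sub_of_le_deriv
    (hf.continuousOn.mono Icc_subset_Ici_self) ?_ ?_ x ⟨hx, hxy.trans hyd⟩ y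
    ⟨hx.trans hxy, hyd⟩ hxy⟩
  · rw [interior_Icc]
    exact (hf.differentiableOn one_ne_zero).mono (Ioo_subset_Icc_self.trans Icc_subset_Ici_self)
  · intro w hw
    rw [interior_Icc] at hw
    rw [deriv_eq_derivWithin_Ici hw.1]
    exact hmin (Ioo_subset_Icc_self hw)

section InverseSqrtSingularity

variable {a : ℝ} {g h : ℝ → ℝ}

lemma continuousOn_of_eq_div_sqrt_sub (hh : ContinuousOn h (Ioi a))
    (hg : ∀ s, a < s → g s = h s / √(s - a)) : ContinuousOn g (Ioi a) :=
  (hh.div (continuous_sqrt.comp_continuousOn (continuousOn_id.sub continuousOn_const))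
    fun _ hs => (sqrt_pos.2 (sub_pos.2 hs)).ne').congr hg

lemma exists_le_div_sqrt_sub {d : ℝ} (hh : ContinuousOn h (Icc a d))
    (hg : ∀ s, a < s → g s = h s / √(s - a)) : ∃ H, ∀ s ∈ Ioc a d, g s ≤ H / √(s - a) := by
  obtain ⟨H, hH⟩ := isCompact_Icc.bddAbove_image hh
  exact ⟨H, fun s hs => (hg s hs.1).trans_le (div_le_div_of_nonneg_right
    (hH ⟨s, Ioc_subset_Icc_self hs, rfl⟩) (sqrt_nonneg _))⟩

lemma exists_div_sqrt_sub_le {d : ℝ} (had : a < d) (hh : ContinuousWithinAt h (Ici a) a)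
    (ha : 0 < h a) (hg : ∀ s, a < s → g s = h s / √(s - a)) :
    ∃ b ∈ Ioo a d, ∀ s ∈ Ioc a b, h a / 2 / √(s - a) ≤ g s := by
  have hev : ∀ᶠ s in 𝓝[≥] a, h a / 2 < h s ∧ s < d :=
    (hh.eventually (eventually_gt_nhds (half_lt_self ha))).and
      (nhdsWithin_le_nhds (eventually_lt_nhds had))
  obtain ⟨b, hab, hb⟩ := mem_nhdsGE_iff_exists_Icc_subset.1 hev
  refine ⟨b, ⟨hab, (hb ⟨hab.le, le_rfl⟩).2⟩, fun s hs => ?_⟩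
  rw [hg s hs.1]
  exact div_le_div_of_nonneg_right (hb (Ioc_subset_Icc_self hs)).1.le (sqrt_nonneg _)

end InverseSqrtSingularity

section Horizon

variable {sT : ℝ} {f g : ℝ → ℝ}

-- The "length integrand" is the integrand of `L a / 2`.
lemma continuousOn_length_integrand {a : ℝ} {t : Set ℝ} (hfc : ContinuousOn f t)
    (hgc : ContinuousOn g t) (hfa : 0 < f a) (hlt : ∀ s ∈ t, f a < f s) :
    ContinuousOn (fun s => g s / f s * f a / √(f s ^ 2 - f a ^ 2)) t :=
  ((hgc.div hfc fun s hs => (hfa.trans (hlt s hs)).ne').mul continuousOn_const).div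
    (continuous_sqrt.comp_continuousOn ((hfc.pow 2).sub continuousOn_const))
    fun s hs => (sqrt_pos.2 (by nlinarith [hlt s hs])).ne'

lemma integrableOn_Ioc_length_integrand {a d μ K : ℝ}
    (hcont : ContinuousOn (fun s => g s / f s * f a / √(f s ^ 2 - f a ^ 2)) (Ioc a d))
    (hfa : 0 < f a) (hμ : 0 < μ) (hflow : ∀ s ∈ Ioc a d, μ * (s - a) ≤ f s - f a)
    (hg0 : ∀ s ∈ Ioc a d, 0 ≤ g s) (hgK : ∀ s ∈ Ioc a d, g s ≤ K) :
    IntegrableOn (fun s => g s / f s * f a / √(f s ^ 2 - f a ^ 2)) (Ioc a d) := by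
  refine integrableOn_Ioc_of_norm_le_div_sqrt_sub (C := K / √(f a * μ))
    (hcont.aestronglyMeasurable measurableSet_Ioc) fun s hs => ?_
  have hsa : 0 < s - a := sub_pos.2 hs.1
  have hlt : f a < f s := by nlinarith [hflow s hs]
  have hgap : f a * μ * (s - a) ≤ f a * (f s - f a) := by
    rw [mul_assoc]
    exact mul_le_mul_of_nonneg_left (hflow s hs) hfa.le
  have hgs := hg0 s hs
  have hfs := hfa.trans hlt
  rw [norm_of_nonneg (by positivity)]
  calc g s / f s * f a / √(f s ^ 2 - f a ^ 2) ≤ g s / √(f a * (f s - f a)) :=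
        div_mul_div_sqrt_sq_sub_sq_le hgs hfa hlt
    _ ≤ K / (√(f a * μ) * √(s - a)) := by
        rw [← sqrt_mul (by positivity)]
        exact div_le_div₀ (hgs.trans (hgK s hs)) (hgK s hs) (sqrt_pos.2 (by positivity))
          (sqrt_le_sqrt hgap)
    _ = K / √(f a * μ) / √(s - a) := (div_div _ _ _).symm

lemma integrableOn_Ioi_length_integrand {a d : ℝ}
    (hcont : ContinuousOn (fun s => g s / f s * f a / √(f s ^ 2 - f a ^ 2)) (Ioi d))
    (hfa : 0 < f a) (hfd : f a < f d) (hmono : ∀ s ∈ Ioi d, f d ≤ f s)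
    (hg0 : ∀ s ∈ Ioi d, 0 ≤ g s) (htail : IntegrableOn (fun s => g s / f s ^ 2) (Ioi d)) :
    IntegrableOn (fun s => g s / f s * f a / √(f s ^ 2 - f a ^ 2)) (Ioi d) := by
  refine (htail.const_mul (f a * (f d / √(f d ^ 2 - f a ^ 2)))).mono'
    (hcont.aestronglyMeasurable measurableSet_Ioi)
    ((ae_restrict_iff' measurableSet_Ioi).2 (ae_of_all _ fun s hs => ?_))
  have hfs : f a < f s := hfd.trans_le (hmono s hs)
  have hsq : 0 < √(f s ^ 2 - f a ^ 2) := sqrt_pos.2 (by nlinarith)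
  have hgs := hg0 s hs
  have hfs' := hfa.trans hfs
  calc ‖g s / f s * f a / √(f s ^ 2 - f a ^ 2)‖
      = f a * (f s / √(f s ^ 2 - f a ^ 2)) * (g s / f s ^ 2) := by
        rw [norm_of_nonneg (by positivity)]
        field_simp
    _ ≤ f a * (f d / √(f d ^ 2 - f a ^ 2)) * (g s / f s ^ 2) :=
        mul_le_mul_of_nonneg_right (mul_le_mul_of_nonneg_left
          (div_sqrt_sq_sub_sq_le_of_le hfa.le hfd (hmono s hs)) hfa.le) (by positivity)

lemma integrableOn_length_integrand {d μ H s₀ : ℝ} (hfc : ContinuousOn f (Ici sT))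
    (hfm : StrictMonoOn f (Ici sT)) (hfT : 0 < f sT) (hgc : ContinuousOn g (Ioi sT))
    (hg0 : ∀ s ∈ Ioi sT, 0 ≤ g s) (hμ : 0 < μ)
    (hflow : ∀ x y, sT ≤ x → x ≤ y → y ≤ d → μ * (y - x) ≤ f y - f x)
    (hgH : ∀ s ∈ Ioc sT d, g s ≤ H / √(s - sT))
    (htail : IntegrableOn (fun s => g s / f s ^ 2) (Ioi d)) (hs₀ : s₀ ∈ Ioo sT d) :
    IntegrableOn (fun s => g s / f s * f s₀ / √(f s ^ 2 - f s₀ ^ 2)) (Ioi s₀) := by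
  obtain ⟨hTs₀, hs₀d⟩ := hs₀
  have hsub : Ioi s₀ ⊆ Ici sT := fun s hs => (hTs₀.trans hs).le
  have hlt : ∀ s ∈ Ioi s₀, f s₀ < f s := fun s hs => hfm hTs₀.le (hsub hs) hs
  have hf₀ : 0 < f s₀ := hfT.trans (hfm self_mem_Ici hTs₀.le hTs₀)
  have hcont := continuousOn_length_integrand (hfc.mono hsub)
    (hgc.mono fun s hs => hTs₀.trans hs) hf₀ hlt
  have hH : 0 ≤ H := by
    simpa using (le_div_iff₀ (sqrt_pos.2 (sub_pos.2 (hTs₀.trans hs₀d)))).1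
      ((hg0 d (hTs₀.trans hs₀d)).trans (hgH d ⟨hTs₀.trans hs₀d, le_rfl⟩))
  have hgK : ∀ s ∈ Ioc s₀ d, g s ≤ H / √(s₀ - sT) := fun s hs =>
    (hgH s ⟨hTs₀.trans hs.1, hs.2⟩).trans (div_le_div_of_nonneg_left hH
      (sqrt_pos.2 (sub_pos.2 hTs₀)) (sqrt_le_sqrt (by linarith [hs.1])))
  rw [← Ioc_union_Ioi_eq_Ioi hs₀d.le]
  exact (integrableOn_Ioc_length_integrand (hcont.mono Ioc_subset_Ioi_self) hf₀ hμ
    (fun s hs => hflow s₀ s hTs₀.le hs.1.le hs.2) (fun s hs => hg0 s (hTs₀.trans hs.1)) hgK).union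
    (integrableOn_Ioi_length_integrand (hcont.mono (Ioi_subset_Ioi hs₀d.le)) hf₀ (hlt d hs₀d)
      (fun s hs => hfm.monotoneOn (hsub hs₀d) (hsub (hs₀d.trans hs)) (le_of_lt hs))
      (fun s hs => hg0 s (hTs₀.trans (hs₀d.trans hs))) htail)

lemma mul_log_le_integral_length_integrand {b c M s₀ : ℝ} (hfm : StrictMonoOn f (Ici sT))
    (hfT : 0 < f sT) (hg0 : ∀ s ∈ Ioi sT, 0 ≤ g s) (hc : 0 ≤ c)
    (hglow : ∀ s ∈ Ioc sT b, c / √(s - sT) ≤ g s) (hM : 0 ≤ M)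
    (hfup : ∀ x y, sT ≤ x → x ≤ y → y ≤ b → f y - f x ≤ M * (y - x)) (hs₀ : s₀ ∈ Ioo sT b)
    (hint : IntegrableOn (fun s => g s / f s * f s₀ / √(f s ^ 2 - f s₀ ^ 2)) (Ioi s₀)) :
    c * f sT / (f b * √(2 * M * f b)) * (log (b - sT) - log (s₀ - sT)) ≤
      ∫ s in Ioi s₀, g s / f s * f s₀ / √(f s ^ 2 - f s₀ ^ 2) := by
  obtain ⟨hTs₀, hs₀b⟩ := hs₀
  have hf : ∀ s ∈ Ici sT, 0 < f s := fun s hs => hfT.trans_le (hfm.monotoneOn self_mem_Ici hs hs)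
  have hpole : IntegrableOn (fun s => c * f sT / (f b * √(2 * M * f b)) * (s - sT)⁻¹)
      (Ioc s₀ b) :=
    (ContinuousOn.integrableOn_Icc (continuousOn_const.mul ((continuousOn_id.sub
      continuousOn_const).inv₀ fun x hx => (sub_pos.2 (hTs₀.trans_le hx.1)).ne'))).mono_set
      Ioc_subset_Icc_self
  have hbound : ∀ s ∈ Ioc s₀ b, c * f sT / (f b * √(2 * M * f b)) * (s - sT)⁻¹ ≤
      g s / f s * f s₀ / √(f s ^ 2 - f s₀ ^ 2) := fun s hs => by
    have hTs : sT < s := hTs₀.trans hs.1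
    rw [← div_eq_mul_inv]
    exact le_div_mul_div_sqrt_sq_sub_sq hc (sub_pos.2 hTs) (hglow s ⟨hTs, hs.2⟩) hfT
      (hfm.monotoneOn self_mem_Ici hTs₀.le hTs₀.le) (hfm hTs₀.le hTs.le hs.1)
      (hfm.monotoneOn hTs.le (hTs.trans_le hs.2).le hs.2)
      ((hfup s₀ s hTs₀.le hs.1.le hs.2).trans (mul_le_mul_of_nonneg_left (by linarith) hM))
  calc _ = ∫ s in Ioc s₀ b, c * f sT / (f b * √(2 * M * f b)) * (s - sT)⁻¹ := by
        rw [integral_const_mul, integral_Ioc_inv_sub hTs₀ hs₀b.le]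
    _ ≤ ∫ s in Ioc s₀ b, g s / f s * f s₀ / √(f s ^ 2 - f s₀ ^ 2) :=
        setIntegral_mono_on hpole (hint.mono_set Ioc_subset_Ioi_self) measurableSet_Ioc hbound
    _ ≤ _ := setIntegral_mono_set hint ((ae_restrict_iff' measurableSet_Ioi).2
        (ae_of_all _ fun s hs => by
          have := hg0 s (hTs₀.trans hs)
          have := hf s (hTs₀.trans hs).le
          have := hf s₀ hTs₀.le
          positivity)) Ioc_subset_Ioi_self.eventuallyLE

lemma tendsto_integral_length_integrand_atTop {b c M : ℝ} (hfm : StrictMonoOn f (Ici sT))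
    (hfT : 0 < f sT) (hg0 : ∀ s ∈ Ioi sT, 0 ≤ g s) (hb : sT < b) (hc : 0 < c)
    (hglow : ∀ s ∈ Ioc sT b, c / √(s - sT) ≤ g s)
    (hfup : ∀ x y, sT ≤ x → x ≤ y → y ≤ b → f y - f x ≤ M * (y - x))
    (hint : ∀ s₀ ∈ Ioo sT b,
      IntegrableOn (fun s => g s / f s * f s₀ / √(f s ^ 2 - f s₀ ^ 2)) (Ioi s₀)) :
    Tendsto (fun s₀ => ∫ s in Ioi s₀, g s / f s * f s₀ / √(f s ^ 2 - f s₀ ^ 2))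
      (𝓝[>] sT) atTop := by
  have hfb : f sT < f b := hfm self_mem_Ici hb.le hb
  have hM : 0 < M := pos_of_mul_pos_left (by linarith [hfup sT b le_rfl hb.le le_rfl])
    (sub_pos.2 hb).le
  have hC : 0 < c * f sT / (f b * √(2 * M * f b)) := by
    have := hfT.trans hfb
    positivity
  refine tendsto_atTop_mono' _ ?_ ((tendsto_log_sub_sub_log_sub_nhdsGT sT b).const_mul_atTop hC)
  filter_upwards [Ioo_mem_nhdsGT hb] with s₀ hs₀ using
    mul_log_le_integral_length_integrand hfm hfT hg0 hc.le hglow hM.le hfup hs₀ (hint s₀ hs₀)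

lemma integrableOn_div_sq_of_le {s : Set ℝ} {m : ℝ} (hs : MeasurableSet s) (hm : 0 < m)
    (hf : ∀ x ∈ s, m ≤ f x) (hfc : ContinuousOn f s) (hgc : ContinuousOn g s)
    (hg : IntegrableOn g s) : IntegrableOn (fun x => g x / f x ^ 2) s := by
  refine (hg.norm.div_const (m ^ 2)).mono' ((hgc.div (hfc.pow 2) fun x hx =>
    (pow_pos (hm.trans_le (hf x hx)) 2).ne').aestronglyMeasurable hs)
    ((ae_restrict_iff' hs).2 (ae_of_all _ fun x hx => ?_))
  rw [norm_div, norm_pow, norm_of_nonneg (hm.trans_le (hf x hx)).le]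
  exact div_le_div_of_nonneg_left (norm_nonneg _) (pow_pos hm 2)
    (pow_le_pow_left₀ hm.le (hf x hx) 2)

lemma norm_integral_mul_sqrt_sq_sub_sq_sub_le {a : ℝ} (hf : ∀ s ∈ Ioi a, 0 < f s)
    (hg0 : ∀ s ∈ Ioi a, 0 ≤ g s) (hint : IntegrableOn (fun s => g s / f s ^ 2) (Ioi a)) :
    ‖∫ s in Ioi a, g s / f s * (√(f s ^ 2 - f a ^ 2) - f s)‖ ≤
      f a ^ 2 * ∫ s in Ioi a, g s / f s ^ 2 := by
  rw [← integral_const_mul]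
  refine norm_integral_le_of_norm_le (hint.const_mul _) ?_
  filter_upwards [ae_restrict_mem measurableSet_Ioi] with s hs
  have hfs := hf s hs
  have hgf : 0 ≤ g s / f s := div_nonneg (hg0 s hs) hfs.le
  rw [norm_mul, norm_of_nonneg hgf, norm_of_nonpos (sub_nonpos.2 (sqrt_sq_sub_sq_le hfs.le _))]
  calc g s / f s * -(√(f s ^ 2 - f a ^ 2) - f s) = g s / f s * (f s - √(f s ^ 2 - f a ^ 2)) := by
        ring
    _ ≤ g s / f s * (f a ^ 2 / f s) :=
        mul_le_mul_of_nonneg_left (sub_sqrt_sq_sub_sq_le hfs _) hgf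
    _ = f a ^ 2 * (g s / f s ^ 2) := by ring

lemma exists_abs_energy_sub_mul_length_le {d : ℝ} (hfm : MonotoneOn f (Ici sT))
    (hfT : 0 < f sT) (hg0 : ∀ s ∈ Ioi sT, 0 ≤ g s)
    (hgf : IntegrableOn (fun s => g s / f s ^ 2) (Ioi sT)) (hg : IntegrableOn g (Ioc sT d)) :
    ∃ B, ∀ s₀ ∈ Ioo sT d, |2 * (∫ s in Ioi s₀, g s / f s * (√(f s ^ 2 - f s₀ ^ 2) - f s)) -
      2 * ∫ s in Ioo sT s₀, g s| ≤ B := by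
  refine ⟨2 * (f d ^ 2 * ∫ s in Ioi sT, g s / f s ^ 2) + 2 * ∫ s in Ioc sT d, g s,
    fun s₀ hs₀ => ?_⟩
  have hsub : Ioi s₀ ⊆ Ioi sT := Ioi_subset_Ioi hs₀.1.le
  have hf : ∀ s ∈ Ioi sT, 0 < f s := fun s hs =>
    hfT.trans_le (hfm self_mem_Ici (mem_Ioi.1 hs).le (mem_Ioi.1 hs).le)
  have hgf0 : ∀ s ∈ Ioi sT, 0 ≤ g s / f s ^ 2 := fun s hs => div_nonneg (hg0 s hs) (sq_nonneg _)
  have hf₀d : f s₀ ^ 2 ≤ f d ^ 2 :=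
    pow_le_pow_left₀ (hf s₀ hs₀.1).le (hfm hs₀.1.le (hs₀.1.trans hs₀.2).le hs₀.2.le) 2
  have htail : ∫ s in Ioi s₀, g s / f s ^ 2 ≤ ∫ s in Ioi sT, g s / f s ^ 2 :=
    setIntegral_mono_set hgf ((ae_restrict_iff' measurableSet_Ioi).2 (ae_of_all _ hgf0))
      hsub.eventuallyLE
  have hfar : ‖∫ s in Ioi s₀, g s / f s * (√(f s ^ 2 - f s₀ ^ 2) - f s)‖ ≤
      f d ^ 2 * ∫ s in Ioi sT, g s / f s ^ 2 :=
    (norm_integral_mul_sqrt_sq_sub_sq_sub_le (fun s hs => hf s (hsub hs))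
      (fun s hs => hg0 s (hsub hs)) (hgf.mono_set hsub)).trans (mul_le_mul hf₀d htail
        (setIntegral_nonneg measurableSet_Ioi fun s hs => hgf0 s (hsub hs)) (sq_nonneg _))
  have hnear : ‖∫ s in Ioo sT s₀, g s‖ ≤ ∫ s in Ioc sT d, g s := by
    have hIoo : Ioo sT s₀ ⊆ Ioc sT d := fun s hs => ⟨hs.1, hs.2.le.trans hs₀.2.le⟩
    rw [norm_of_nonneg (setIntegral_nonneg measurableSet_Ioo fun s hs => hg0 s hs.1)]
    exact setIntegral_mono_set hg ((ae_restrict_iff' measurableSet_Ioc).2 (ae_of_all _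
      fun s hs => hg0 s hs.1)) hIoo.eventuallyLE
  rw [← norm_eq_abs]
  calc _ ≤ ‖2 * ∫ s in Ioi s₀, g s / f s * (√(f s ^ 2 - f s₀ ^ 2) - f s)‖ +
        ‖2 * ∫ s in Ioo sT s₀, g s‖ := norm_sub_le _ _
    _ ≤ _ := by
        rw [norm_mul, norm_mul, norm_two]
        linarith

end Horizon

theorem horizon_divergent_g_confinement_general (sT : ℝ)
    (f g h L E : ℝ → ℝ)
    (hf : ContDiffOn ℝ 1 f (Ici sT)) (hfT : 0 < f sT)
    (hf' : ∀ s ∈ Ici sT, 0 < derivWithin f (Ici sT) s)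
    (hgdef : ∀ s, sT < s → g s = h s / Real.sqrt (s - sT))
    (hh : ContinuousOn h (Ici sT)) (hhnn : ∀ s ∈ Ici sT, 0 ≤ h s) (hhT : 0 < h sT)
    (hint : ∃ c : ℝ, sT < c ∧ IntegrableOn (fun s => g s / (f s) ^ 2) (Ioi c))
    (hL : ∀ s₀, L s₀ = 2 * ∫ s in Ioi s₀,
      (g s / f s) * f s₀ / Real.sqrt ((f s) ^ 2 - (f s₀) ^ 2))
    (hE : ∀ s₀, E s₀ = f s₀ * L s₀
      + 2 * (∫ s in Ioi s₀, (g s / f s) * (Real.sqrt ((f s) ^ 2 - (f s₀) ^ 2) - f s))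
      - 2 * ∫ s in Ioo sT s₀, g s) :
    Tendsto L (nhdsWithin sT (Ioi sT)) atTop ∧
    Tendsto (fun s₀ => E s₀ / L s₀) (nhdsWithin sT (Ioi sT)) (nhds (f sT)) := by
  obtain ⟨d, hd, htail⟩ := hint
  have hfm : StrictMonoOn f (Ici sT) :=
    strictMonoOn_Ici_of_derivWithin_pos hf.continuousOn fun s hs => hf' s (mem_Ioi.1 hs).le
  have hg0 : ∀ s ∈ Ioi sT, 0 ≤ g s := fun s hs => by
    rw [hgdef s hs]
    exact div_nonneg (hhnn s (mem_Ioi.1 hs).le) (sqrt_nonneg _)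
  have hgc : ContinuousOn g (Ioi sT) :=
    continuousOn_of_eq_div_sqrt_sub (hh.mono Ioi_subset_Ici_self) hgdef
  obtain ⟨μ, hμ, hflow⟩ := hf.exists_mul_sub_le_sub (fun s hs => hf' s hs.1) hd.le
  obtain ⟨H, hgH⟩ := exists_le_div_sqrt_sub (d := d) (hh.mono Icc_subset_Ici_self) hgdef
  obtain ⟨b, hb, hglow⟩ := exists_div_sqrt_sub_le hd (hh sT self_mem_Ici) hhT hgdef
  obtain ⟨M, hfup⟩ := hf.exists_sub_le_mul_sub b
  have hLtop : Tendsto L (𝓝[>] sT) atTop := by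
    rw [funext hL]
    exact (tendsto_integral_length_integrand_atTop hfm hfT hg0 hb.1 (half_pos hhT) hglow hfup
      fun s₀ hs₀ => integrableOn_length_integrand hf.continuousOn hfm hfT hgc hg0 hμ hflow hgH
        htail ⟨hs₀.1, hs₀.2.trans hb.2⟩).const_mul_atTop two_pos
  have hgint : IntegrableOn g (Ioc sT d) :=
    integrableOn_Ioc_of_norm_le_div_sqrt_sub
      ((hgc.mono Ioc_subset_Ioi_self).aestronglyMeasurable measurableSet_Ioc)
      fun s hs => (norm_of_nonneg (hg0 s hs.1)).trans_le (hgH s hs)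
  have hgf : IntegrableOn (fun s => g s / f s ^ 2) (Ioi sT) := by
    rw [← Ioc_union_Ioi_eq_Ioi hd.le]
    exact (integrableOn_div_sq_of_le measurableSet_Ioc hfT
      (fun s hs => hfm.monotoneOn self_mem_Ici (mem_Ici.2 hs.1.le) hs.1.le)
      (hf.continuousOn.mono fun s hs => mem_Ici.2 hs.1.le) (hgc.mono Ioc_subset_Ioi_self)
      hgint).union htail
  obtain ⟨B, hB⟩ := exists_abs_energy_sub_mul_length_le hfm.monotoneOn hfT hg0 hgf hgint
  refine ⟨hLtop, tendsto_div_of_abs_sub_mul_le (B := B) hLtop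
    ((hf.continuousOn sT self_mem_Ici).mono Ioi_subset_Ici_self) ?_⟩
  filter_upwards [Ioo_mem_nhdsGT hd] with s₀ hs₀
  convert hB s₀ hs₀ using 2
  rw [hE]
  ring

/-- Sufficient condition for confinement: if `g` diverges like an inverse square root at a
horizon `s_T` where `f(s_T) > 0`, then the separation `L(s₀) → ∞` as `s₀ → s_T⁺` and the
renormalized energy satisfies `E(s₀)/L(s₀) → f(s_T)`: area-law (linearly confining)
behavior with string tension `f(s_T)`. -/
theorem horizon_divergent_g_confinement (sT : ℝ) (hsT : 0 < sT)
    (f g h L E : ℝ → ℝ)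
    (hf : ContDiffOn ℝ 1 f (Ici sT)) (hfT : 0 < f sT)
    (hf' : ∀ s ∈ Ici sT, 0 < derivWithin f (Ici sT) s)
    (hgdef : ∀ s, sT < s → g s = h s / Real.sqrt (s - sT))
    (hh : ContinuousOn h (Ici sT)) (hhnn : ∀ s ∈ Ici sT, 0 ≤ h s) (hhT : 0 < h sT)
    (hint : ∃ c : ℝ, sT < c ∧ IntegrableOn (fun s => g s / (f s) ^ 2) (Ioi c))
    (hL : ∀ s₀, L s₀ = 2 * ∫ s in Ioi s₀,
      (g s / f s) * f s₀ / Real.sqrt ((f s) ^ 2 - (f s₀) ^ 2))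
    (hE : ∀ s₀, E s₀ = f s₀ * L s₀
      + 2 * (∫ s in Ioi s₀, (g s / f s) * (Real.sqrt ((f s) ^ 2 - (f s₀) ^ 2) - f s))
      - 2 * ∫ s in Ioo sT s₀, g s) :
    Tendsto L (nhdsWithin sT (Ioi sT)) atTop ∧
    Tendsto (fun s₀ => E s₀ / L s₀) (nhdsWithin sT (Ioi sT)) (nhds (f sT)) :=
  horizon_divergent_g_confinement_general sT f g h L E hf hfT hf' hgdef hh hhnn hhT hint hL hE
end
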